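/- Let (X, d) be a metric space and let Θ, Υ : X → L²(μ) be maps whose values are almost-everywhere-nonnegative functions of unit norm, with Θ K₁-Lipschitz and Υ K₂-Lipschitz. Define the straight-line homotopy H : X × [0,1] → L²(μ) by H(x, t) = (1−t)·Θ(x) + t·Υ(x). Then for all x, y ∈ X and s, t ∈ [0,1], ‖H(x, t) − H(y, s)‖ ≤ (K₁² + K₂²)^{1/2} · d(x, y) + √2 · |t − s|. (This combines the two estimates of Section 6: each time-slice H^t of the straight-line homotopy stretches by at most (K₁² + K₂²)^{1/2}, and H stretches by at most √2 in the time direction; it yields the Lipschitz bound on H used in the proof of Proposition 7.2.) -/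

import Mathlib

/-!
Write `H(x, t) - H(y, s) = (H^t(x) - H^t(y)) + (t - s) • (Υ y - Θ y)`. The time slice `H^t` is a
convex combination of a `K₁`- and a `K₂`-Lipschitz map, hence `max K₁ K₂`-Lipschitz. For the
second term, two a.e.-nonnegative functions have nonnegative `L²` inner product, so two such unit
vectors are at distance at most `√2`.
-/

open MeasureTheory

section ConvexCombination

variable {X E : Type*} [PseudoMetricSpace X] [SeminormedAddCommGroup E] [NormedSpace ℝ E]

theorem LipschitzWith.convexCombination {f g : X → E} {K₁ K₂ : NNReal}
    (hf : LipschitzWith K₁ f) (hg : LipschitzWith K₂ g) {t : ℝ} (ht : t ∈ Set.Icc (0 : ℝ) 1) :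
    LipschitzWith (max K₁ K₂) fun x ↦ (1 - t) • f x + t • g x := by
  obtain ⟨ht0, ht1⟩ := ht
  refine LipschitzWith.of_dist_le_mul fun x y ↦ ?_
  have hf' : dist (f x) (f y) ≤ max K₁ K₂ * dist x y :=
    (hf.weaken (le_max_left _ _)).dist_le_mul x y
  have hg' : dist (g x) (g y) ≤ max K₁ K₂ * dist x y :=
    (hg.weaken (le_max_right _ _)).dist_le_mul x y
  rw [dist_eq_norm] at hf' hg' ⊢
  calc ‖(1 - t) • f x + t • g x - ((1 - t) • f y + t • g y)‖
      = ‖(1 - t) • (f x - f y) + t • (g x - g y)‖ := by congr 1; module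
    _ ≤ (1 - t) * ‖f x - f y‖ + t * ‖g x - g y‖ := by
      refine (norm_add_le _ _).trans_eq ?_
      rw [norm_smul, norm_smul, Real.norm_of_nonneg (sub_nonneg.2 ht1), Real.norm_of_nonneg ht0]
    _ ≤ (1 - t) * (max K₁ K₂ * dist x y) + t * (max K₁ K₂ * dist x y) := by
      gcongr
    _ = max K₁ K₂ * dist x y := by ring

end ConvexCombination

theorem max_le_sqrt_sq_add_sq (a b : ℝ) : max a b ≤ √(a ^ 2 + b ^ 2) :=
  max_le
    ((le_abs_self a).trans (Real.abs_le_sqrt (le_add_of_nonneg_right (sq_nonneg b))))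
    ((le_abs_self b).trans (Real.abs_le_sqrt (le_add_of_nonneg_left (sq_nonneg a))))

theorem norm_sub_sq_le_of_inner_nonneg {F : Type*} [SeminormedAddCommGroup F]
    [InnerProductSpace ℝ F] {u v : F} (huv : 0 ≤ inner ℝ u v) :
    ‖u - v‖ ^ 2 ≤ ‖u‖ ^ 2 + ‖v‖ ^ 2 := by
  rw [norm_sub_sq_real]
  linarith

theorem MeasureTheory.L2.inner_nonneg_of_ae_nonneg {Ω : Type*} [MeasurableSpace Ω]
    {μ : Measure Ω} {f g : Lp ℝ 2 μ} (hf : 0 ≤ᵐ[μ] (f : Ω → ℝ)) (hg : 0 ≤ᵐ[μ] (g : Ω → ℝ)) :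
    0 ≤ inner ℝ f g := by
  rw [L2.inner_def]
  refine integral_nonneg_of_ae ?_
  filter_upwards [hf, hg] with a hfa hga
  simpa using mul_nonneg hga hfa

theorem MeasureTheory.L2.norm_sub_le_sqrt_two_of_ae_nonneg {Ω : Type*} [MeasurableSpace Ω]
    {μ : Measure Ω} {f g : Lp ℝ 2 μ} (hf : 0 ≤ᵐ[μ] (f : Ω → ℝ)) (hg : 0 ≤ᵐ[μ] (g : Ω → ℝ))
    (hf1 : ‖f‖ = 1) (hg1 : ‖g‖ = 1) :
    ‖f - g‖ ≤ √2 := by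
  have h := norm_sub_sq_le_of_inner_nonneg (L2.inner_nonneg_of_ae_nonneg hf hg)
  rw [hf1, hg1] at h
  exact Real.le_sqrt_of_sq_le (by linarith)

theorem straight_line_homotopy_lipschitz_estimate_general
    {Ω : Type*} [MeasurableSpace Ω] {μ : Measure Ω}
    {X : Type*} [MetricSpace X]
    (Θ Υ : X → Lp ℝ 2 μ) (K₁ K₂ : NNReal)
    (hΘ : LipschitzWith K₁ Θ) (hΥ : LipschitzWith K₂ Υ)
    (hΘpos : ∀ x, 0 ≤ᵐ[μ] (Θ x : Ω → ℝ)) (hΥpos : ∀ x, 0 ≤ᵐ[μ] (Υ x : Ω → ℝ))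
    (hΘn : ∀ x, ‖Θ x‖ = 1) (hΥn : ∀ x, ‖Υ x‖ = 1)
    (x y : X) (s t : ℝ) (ht : t ∈ Set.Icc (0 : ℝ) 1) :
    ‖((1 - t) • Θ x + t • Υ x) - ((1 - s) • Θ y + s • Υ y)‖ ≤
      Real.sqrt ((K₁ : ℝ) ^ 2 + (K₂ : ℝ) ^ 2) * dist x y + Real.sqrt 2 * |t - s| := by
  have hslice : dist ((1 - t) • Θ x + t • Υ x) ((1 - t) • Θ y + t • Υ y) ≤
      √((K₁ : ℝ) ^ 2 + (K₂ : ℝ) ^ 2) * dist x y :=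
    ((hΘ.convexCombination hΥ ht).dist_le_mul x y).trans
      (mul_le_mul_of_nonneg_right (max_le_sqrt_sq_add_sq K₁ K₂) dist_nonneg)
  have htime : ‖(t - s) • (Υ y - Θ y)‖ ≤ √2 * |t - s| := by
    rw [norm_smul, Real.norm_eq_abs, mul_comm]
    exact mul_le_mul_of_nonneg_right
      (L2.norm_sub_le_sqrt_two_of_ae_nonneg (hΥpos y) (hΘpos y) (hΥn y) (hΘn y)) (abs_nonneg _)
  rw [dist_eq_norm] at hslice
  calc ‖((1 - t) • Θ x + t • Υ x) - ((1 - s) • Θ y + s • Υ y)‖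
      = ‖((1 - t) • Θ x + t • Υ x - ((1 - t) • Θ y + t • Υ y)) + (t - s) • (Υ y - Θ y)‖ := by
        congr 1; module
    _ ≤ _ := (norm_add_le _ _).trans (add_le_add hslice htime)

/-- Lipschitz estimate for the straight-line homotopy between two Lipschitz maps into the
a.e.-nonnegative unit vectors of `L²(μ)`. -/
theorem straight_line_homotopy_lipschitz_estimate
    {Ω : Type*} [MeasurableSpace Ω] {μ : Measure Ω}
    {X : Type*} [MetricSpace X]
    (Θ Υ : X → Lp ℝ 2 μ) (K₁ K₂ : NNReal)
    (hΘ : LipschitzWith K₁ Θ) (hΥ : LipschitzWith K₂ Υ)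
    (hΘpos : ∀ x, 0 ≤ᵐ[μ] (Θ x : Ω → ℝ)) (hΥpos : ∀ x, 0 ≤ᵐ[μ] (Υ x : Ω → ℝ))
    (hΘn : ∀ x, ‖Θ x‖ = 1) (hΥn : ∀ x, ‖Υ x‖ = 1)
    (x y : X) (s t : ℝ) (hs : s ∈ Set.Icc (0 : ℝ) 1) (ht : t ∈ Set.Icc (0 : ℝ) 1) :
    ‖((1 - t) • Θ x + t • Υ x) - ((1 - s) • Θ y + s • Υ y)‖ ≤
      Real.sqrt ((K₁ : ℝ) ^ 2 + (K₂ : ℝ) ^ 2) * dist x y + Real.sqrt 2 * |t - s| :=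
  straight_line_homotopy_lipschitz_estimate_general Θ Υ K₁ K₂ hΘ hΥ hΘpos hΥpos hΘn hΥn x y s t ht
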